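/- arXiv:1705.10299 — 5 statements merged into one kernel-verified Lean document; each statement's English description precedes it below -/
import Mathlib

section
/- For every 0 < p ≤ q and every vector x ∈ ℂ^N, the best s-term approximation error of x in the ℓ^q norm satisfies σ_s(x)_q ≤ s^(1/q - 1/p) · ‖x‖_p. -/
open Finset

noncomputable def lpNorm {n : ℕ} (p : ℝ) (x : Fin n → ℂ) : ℝ :=
  (∑ i, ‖x i‖ ^ p) ^ (1 / p)

/-- Best `s`-term approximation error of `x` in the `ℓ^p` (quasi-)norm. -/
noncomputable def bestApprox {n : ℕ} (s : ℕ) (p : ℝ) (x : Fin n → ℂ) : ℝ :=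
  sInf ((fun w => lpNorm p (x - w)) ''
    {w : Fin n → ℂ | ∃ S : Finset (Fin n), S.card ≤ s ∧ ∀ i ∉ S, w i = 0})

/-!
Keep the `s` largest entries of `x`. Each kept entry dominates every discarded one, so a
discarded entry satisfies `s |x_i|^p ≤ ‖x‖_p^p`; hence
`|x_i|^q = (|x_i|^p)^((q-p)/p) |x_i|^p ≤ (‖x‖_p^p / s)^((q-p)/p) |x_i|^p`, and summing over the
discarded entries gives `σ_s(x)_q^q ≤ s^(1 - q/p) ‖x‖_p^q`.
-/

namespace Finset

variable {ι M : Type*} [Fintype ι] [DecidableEq ι]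
  [AddCommMonoid M] [LinearOrder M] [IsOrderedCancelAddMonoid M]

theorem exists_card_eq_forall_notMem_le (f : ι → M) {s : ℕ} (hs : s ≤ Fintype.card ι) :
    ∃ T : Finset ι, #T = s ∧ ∀ i ∉ T, ∀ j ∈ T, f i ≤ f j := by
  have hne : (powersetCard s (univ : Finset ι)).Nonempty := powersetCard_nonempty.2 (by simpa)
  -- a subset of size `s` with maximal `f`-sum cannot be improved by swapping one element
  obtain ⟨T, hT, hTmax⟩ := exists_max_image _ (fun T => ∑ j ∈ T, f j) hne
  have hTcard : #T = s := (mem_powersetCard.1 hT).2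
  refine ⟨T, hTcard, fun i hi j hj => le_of_not_gt fun hlt => ?_⟩
  have hi' : i ∉ T.erase j := fun h => hi (mem_of_mem_erase h)
  have hswap : insert i (T.erase j) ∈ powersetCard s univ := by
    refine mem_powersetCard.2 ⟨subset_univ _, ?_⟩
    rw [card_insert_of_notMem hi', card_erase_of_mem hj, ← hTcard]
    exact Nat.sub_add_cancel (card_pos.2 ⟨j, hj⟩)
  refine (hTmax _ hswap).not_gt ?_
  rw [sum_insert hi', ← add_sum_erase T _ hj]
  exact add_lt_add_left hlt _

theorem exists_card_le_forall_notMem_nsmul_le_sum {f : ι → M} (hf : 0 ≤ f) (s : ℕ) :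
    ∃ T : Finset ι, #T ≤ s ∧ ∀ i ∉ T, s • f i ≤ ∑ j, f j := by
  rcases le_or_gt s (Fintype.card ι) with hs | hs
  · obtain ⟨T, hTcard, hTtop⟩ := exists_card_eq_forall_notMem_le f hs
    refine ⟨T, hTcard.le, fun i hi => ?_⟩
    calc s • f i ≤ ∑ j ∈ T, f j := hTcard ▸ card_nsmul_le_sum T f (f i) (hTtop i hi)
      _ ≤ ∑ j, f j := sum_le_univ_sum_of_nonneg hf
  · exact ⟨univ, (card_univ (α := ι)).trans_le hs.le, fun i hi => absurd (mem_univ i) hi⟩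

end Finset

theorem Real.rpow_le_rpow_mul_rpow_of_rpow_le {a B p q : ℝ} (ha : 0 ≤ a) (hp : 0 < p)
    (hpq : p ≤ q) (haB : a ^ p ≤ B) : a ^ q ≤ B ^ ((q - p) / p) * a ^ p := by
  have hsplit : a ^ q = (a ^ p) ^ ((q - p) / p) * a ^ p := by
    rw [← rpow_mul ha, ← rpow_add' ha (by field_simp; linarith)]
    congr 1
    field_simp
    ring
  rw [hsplit]
  gcongr

theorem Real.rpow_div_mul_self_rpow_one_div {A s p q : ℝ} (hA : 0 ≤ A) (hs : 0 < s)
    (hp : 0 < p) (hq : 0 < q) :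
    ((A / s) ^ ((q - p) / p) * A) ^ (1 / q) = s ^ (1 / q - 1 / p) * A ^ (1 / p) := by
  have hAs : (A / s) ^ ((q - p) / p) * A = A ^ (q / p) * s ^ (-((q - p) / p)) := by
    rw [div_rpow hA hs.le, rpow_neg hs.le, div_eq_mul_inv, mul_right_comm,
      ← rpow_add_one' hA (by rw [div_add_one hp.ne', sub_add_cancel]; positivity)]
    congr 2
    field_simp
    ring
  rw [hAs, mul_rpow (by positivity) (by positivity), ← rpow_mul hA, ← rpow_mul hs.le, mul_comm]
  congr 2 <;> field_simp
  ring

theorem lpNorm_nonneg {n : ℕ} (p : ℝ) (x : Fin n → ℂ) : 0 ≤ lpNorm p x :=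
  Real.rpow_nonneg (sum_nonneg fun _ _ => Real.rpow_nonneg (norm_nonneg _) _) _

theorem lpNorm_sub_indicator {n : ℕ} {p : ℝ} (hp : p ≠ 0) (T : Finset (Fin n)) (x : Fin n → ℂ) :
    lpNorm p (x - (T : Set (Fin n)).indicator x) = (∑ i ∈ Tᶜ, ‖x i‖ ^ p) ^ (1 / p) := by
  rw [← Set.indicator_compl, lpNorm, ← sum_indicator_subset _ (subset_univ Tᶜ)]
  refine congrArg (· ^ (1 / p)) (sum_congr rfl fun i _ => ?_)
  by_cases hi : i ∈ T <;> simp [hi, Real.zero_rpow hp]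

theorem bestApprox_le_lpNorm_sub {n s : ℕ} (p : ℝ) (x w : Fin n → ℂ) {T : Finset (Fin n)}
    (hT : #T ≤ s) (hw : ∀ i ∉ T, w i = 0) : bestApprox s p x ≤ lpNorm p (x - w) :=
  csInf_le ⟨0, by rintro _ ⟨v, -, rfl⟩; exact lpNorm_nonneg p _⟩ ⟨w, ⟨T, hT, hw⟩, rfl⟩

theorem stmt0_general {N : ℕ} (s : ℕ) (hs1 : 1 ≤ s)
    (p q : ℝ) (hp : 0 < p) (hpq : p ≤ q) (x : Fin N → ℂ) :
    bestApprox s q x ≤ (s : ℝ) ^ (1 / q - 1 / p) * lpNorm p x := by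
  have hq : 0 < q := hp.trans_le hpq
  have hs : (0 : ℝ) < s := by exact_mod_cast hs1
  set A := ∑ i, ‖x i‖ ^ p
  obtain ⟨T, hTcard, hTtail⟩ := exists_card_le_forall_notMem_nsmul_le_sum
    (f := fun i => ‖x i‖ ^ p) (fun i => Real.rpow_nonneg (norm_nonneg (x i)) p) s
  have htail : ∑ i ∈ Tᶜ, ‖x i‖ ^ q ≤ (A / s) ^ ((q - p) / p) * A := by
    calc ∑ i ∈ Tᶜ, ‖x i‖ ^ q ≤ ∑ i ∈ Tᶜ, (A / s) ^ ((q - p) / p) * ‖x i‖ ^ p := by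
          refine sum_le_sum fun i hi => Real.rpow_le_rpow_mul_rpow_of_rpow_le (norm_nonneg _)
            hp hpq ?_
          rw [le_div_iff₀' hs, ← nsmul_eq_mul]
          exact hTtail i (mem_compl.1 hi)
      _ ≤ (A / s) ^ ((q - p) / p) * A := by
          rw [← mul_sum]
          gcongr
          exact sum_le_univ_sum_of_nonneg fun i => Real.rpow_nonneg (norm_nonneg _) _
  calc bestApprox s q x ≤ lpNorm q (x - (T : Set (Fin N)).indicator x) :=
        bestApprox_le_lpNorm_sub q x _ hTcard fun i hi => Set.indicator_of_notMem hi x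
    _ = (∑ i ∈ Tᶜ, ‖x i‖ ^ q) ^ (1 / q) := lpNorm_sub_indicator hq.ne' T x
    _ ≤ ((A / s) ^ ((q - p) / p) * A) ^ (1 / q) := by gcongr
    _ = (s : ℝ) ^ (1 / q - 1 / p) * lpNorm p x :=
        Real.rpow_div_mul_self_rpow_one_div (sum_nonneg fun _ _ => by positivity) hs hp hq

/-- For every `0 < p ≤ q`, `σ_s(x)_q ≤ s^(1/q - 1/p) ‖x‖_p`. -/
theorem stmt0 {N : ℕ} (s : ℕ) (hs1 : 1 ≤ s) (hsN : s ≤ N)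
    (p q : ℝ) (hp : 0 < p) (hpq : p ≤ q) (x : Fin N → ℂ) :
    bestApprox s q x ≤ (s : ℝ) ^ (1 / q - 1 / p) * lpNorm p x :=
  stmt0_general s hs1 p q hp hpq x
end

section
/- Let M ∈ ℂ^{m×N} be a random matrix with rows m_1, …, m_m. Then E‖MM* − I‖_2 ≤ E[max_{i∈[m]} |‖m_i‖_2^2 − 1|] + 4 max_{T ⊆ [m]} E‖M_T M_{T̄}*‖_2, where M_T is the restriction of M to the rows indexed by T and T̄ = [m]\T. -/
/-!
Write `MM* − I` as its diagonal part plus its off-diagonal part. The diagonal entries are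
`‖m_i‖₂² − 1`, so the diagonal part has spectral norm `max_i |‖m_i‖₂² − 1|`. An off-diagonal
position `(i, k)` lies in the block `T × T̄` for exactly a quarter of the `2^m` sets `T`, so the
off-diagonal part is `4 · 2^{-m} ∑_T M_T M_{T̄}*`. The triangle inequality and linearity of
expectation then bound `E‖MM* − I‖` by `E max_i |‖m_i‖₂² − 1|` plus four times an average of the
`E‖M_T M_{T̄}*‖`, which is at most their maximum.
-/

open MeasureTheory Matrix

/-- Spectral norm (operator norm induced by the Euclidean norms). -/
noncomputable def specNorm {a b : ℕ} (B : Matrix (Fin a) (Fin b) ℂ) : ℝ :=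
  sSup ((fun x => lpNorm 2 (B.mulVec x)) '' {x : Fin b → ℂ | lpNorm 2 x ≤ 1})

/-- The decoupled off-diagonal block `M_T M_{T̄}*`, padded by zeros to an `m × m` matrix
(this padding leaves the spectral norm unchanged). -/
noncomputable def decoupledBlock {m N : ℕ} (M : Matrix (Fin m) (Fin N) ℂ)
    (T : Finset (Fin m)) : Matrix (Fin m) (Fin m) ℂ :=
  Matrix.of fun i k => if i ∈ T ∧ k ∉ T then (M * Mᴴ) i k else 0

open scoped Matrix.Norms.L2Operator

lemma lpNorm_two_eq_norm_toLp {n : ℕ} (x : Fin n → ℂ) :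
    lpNorm 2 x = ‖WithLp.toLp 2 x‖ := by
  rw [_root_.lpNorm, EuclideanSpace.norm_eq, Real.sqrt_eq_rpow]
  norm_cast

lemma specNorm_eq_l2_opNorm {a b : ℕ} (B : Matrix (Fin a) (Fin b) ℂ) : specNorm B = ‖B‖ := by
  rw [l2_opNorm_def, ← ContinuousLinearMap.sSup_unitClosedBall_eq_norm, specNorm]
  congr 1
  ext r
  constructor
  · rintro ⟨x, hx, rfl⟩
    refine ⟨WithLp.toLp 2 x, ?_, ?_⟩
    · simpa [lpNorm_two_eq_norm_toLp] using hx
    · simp [lpNorm_two_eq_norm_toLp]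
  · rintro ⟨x, hx, rfl⟩
    refine ⟨x.ofLp, ?_, ?_⟩
    · simpa [lpNorm_two_eq_norm_toLp] using hx
    · simp [lpNorm_two_eq_norm_toLp, toLpLin_apply]

lemma mul_conjTranspose_apply_self {m N : ℕ} (M : Matrix (Fin m) (Fin N) ℂ) (i : Fin m) :
    (M * Mᴴ) i i = ((lpNorm 2 (M i) ^ 2 : ℝ) : ℂ) := by
  rw [lpNorm_two_eq_norm_toLp, EuclideanSpace.norm_sq_eq, mul_apply]
  push_cast
  exact Finset.sum_congr rfl fun j _ => Complex.mul_conj' (M i j)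

open Finset in
lemma card_filter_mem_and_not_mem_mul_four {ι : Type*} [Fintype ι] [DecidableEq ι] {i k : ι}
    (h : i ≠ k) : #{T : Finset ι | i ∈ T ∧ k ∉ T} * 4 = 2 ^ Fintype.card ι := by
  have hbij : #{T : Finset ι | i ∈ T ∧ k ∉ T} = #({i, k}ᶜ : Finset ι).powerset := by
    refine card_nbij' (fun T => T \ {i, k}) (insert i) ?_ ?_ ?_ ?_ <;> intro T <;>
      simp only [mem_coe, mem_filter, mem_univ, true_and, mem_powerset, subset_iff, mem_compl,
        Finset.ext_iff] <;> grind
  rw [hbij, card_powerset, ← card_compl_add_card {i, k}, card_pair h, pow_add]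
  norm_num

lemma four_nsmul_sum_blocks_eq {ι α : Type*} [Fintype ι] [DecidableEq ι] [AddCommGroup α]
    (A : Matrix ι ι α) :
    4 • ∑ T : Finset ι, of (fun i k => if i ∈ T ∧ k ∉ T then A i k else 0) =
      2 ^ Fintype.card ι • (A - diagonal (diag A)) := by
  ext i k
  rcases eq_or_ne i k with rfl | hik
  · simp [Matrix.sum_apply]
  · simp only [Matrix.smul_apply, Matrix.sum_apply, of_apply, Finset.sum_ite,
      Finset.sum_const_zero, add_zero, Finset.sum_const, Matrix.sub_apply,
      diagonal_apply_ne _ hik, sub_zero, smul_smul, ← card_filter_mem_and_not_mem_mul_four hik,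
      mul_comm]

lemma mul_conjTranspose_sub_diagonal_eq {m N : ℕ} (M : Matrix (Fin m) (Fin N) ℂ) :
    M * Mᴴ - diagonal (diag (M * Mᴴ)) = (4 / 2 ^ m : ℂ) • ∑ T, decoupledBlock M T := by
  have h : 4 • ∑ T, decoupledBlock M T = 2 ^ m • (M * Mᴴ - diagonal (diag (M * Mᴴ))) := by
    simpa only [Fintype.card_fin, decoupledBlock] using four_nsmul_sum_blocks_eq (M * Mᴴ)
  rw [div_eq_inv_mul, mul_smul, show (4 : ℂ) = ((4 : ℕ) : ℂ) by norm_num,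
    Nat.cast_smul_eq_nsmul, h, ← Nat.cast_smul_eq_nsmul ℂ, Nat.cast_pow, Nat.cast_ofNat,
    inv_smul_smul₀ (pow_ne_zero m two_ne_zero)]

lemma norm_diagonal_diag_mul_conjTranspose_sub_one_le {m N : ℕ}
    (M : Matrix (Fin m) (Fin N) ℂ) :
    ‖diagonal (diag (M * Mᴴ) - 1)‖ ≤ ⨆ i, |lpNorm 2 (M i) ^ 2 - 1| := by
  rw [l2_opNorm_diagonal, pi_norm_le_iff_of_nonneg (Real.iSup_nonneg fun _ => abs_nonneg _)]
  intro i
  rw [Pi.sub_apply, diag_apply, mul_conjTranspose_apply_self, Pi.one_apply,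
    ← Complex.ofReal_one, ← Complex.ofReal_sub, Complex.norm_real, Real.norm_eq_abs]
  exact le_ciSup (f := fun i => |lpNorm 2 (M i) ^ 2 - 1|) (Set.finite_range _).bddAbove i

lemma norm_mul_conjTranspose_sub_one_le {m N : ℕ} (M : Matrix (Fin m) (Fin N) ℂ) :
    ‖M * Mᴴ - 1‖ ≤ (⨆ i, |lpNorm 2 (M i) ^ 2 - 1|) +
      4 / 2 ^ m * ∑ T : Finset (Fin m), ‖decoupledBlock M T‖ := by
  have hsplit : M * Mᴴ - 1 =
      diagonal (diag (M * Mᴴ) - 1) + (M * Mᴴ - diagonal (diag (M * Mᴴ))) := by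
    rw [show diagonal (diag (M * Mᴴ) - 1) = diagonal (diag (M * Mᴴ)) - 1 by
      rw [← diagonal_one, diagonal_sub]; rfl]
    abel
  calc ‖M * Mᴴ - 1‖
      ≤ ‖diagonal (diag (M * Mᴴ) - 1)‖ + ‖M * Mᴴ - diagonal (diag (M * Mᴴ))‖ :=
        hsplit ▸ norm_add_le _ _
    _ ≤ _ := by
      rw [mul_conjTranspose_sub_diagonal_eq, norm_smul]
      gcongr
      · exact norm_diagonal_diag_mul_conjTranspose_sub_one_le M
      · simp
      · exact norm_sum_le _ _

theorem stmt9_general {Ω : Type*} [MeasurableSpace Ω] (μ : Measure Ω)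
    {m N : ℕ} (M : Ω → Matrix (Fin m) (Fin N) ℂ)
    (h2 : Integrable (fun ω => ⨆ i : Fin m, |lpNorm 2 (M ω i) ^ 2 - 1|) μ)
    (h3 : ∀ T : Finset (Fin m), Integrable (fun ω => specNorm (decoupledBlock (M ω) T)) μ) :
    ∫ ω, specNorm (M ω * (M ω)ᴴ - 1) ∂μ ≤
      (∫ ω, (⨆ i : Fin m, |lpNorm 2 (M ω i) ^ 2 - 1|) ∂μ)
      + 4 * ⨆ T : Finset (Fin m), ∫ ω, specNorm (decoupledBlock (M ω) T) ∂μ := by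
  simp only [specNorm_eq_l2_opNorm] at h3 ⊢
  set E : Finset (Fin m) → ℝ := fun T => ∫ ω, ‖decoupledBlock (M ω) T‖ ∂μ
  have hsum : Integrable (fun ω => ∑ T, ‖decoupledBlock (M ω) T‖) μ :=
    integrable_finsetSum _ fun T _ => h3 T
  have havg : ∑ T, E T ≤ 2 ^ m * ⨆ T, E T := by
    have := Finset.sum_le_card_nsmul Finset.univ E _
      fun T _ => le_ciSup (Set.finite_range E).bddAbove T
    simpa using this
  calc ∫ ω, ‖M ω * (M ω)ᴴ - 1‖ ∂μ
      ≤ ∫ ω, (⨆ i, |lpNorm 2 (M ω i) ^ 2 - 1|) +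
          4 / 2 ^ m * ∑ T, ‖decoupledBlock (M ω) T‖ ∂μ :=
        integral_mono_of_nonneg (ae_of_all _ fun _ => norm_nonneg _)
          (h2.add (hsum.const_mul _)) (ae_of_all _ fun ω => norm_mul_conjTranspose_sub_one_le (M ω))
    _ = (∫ ω, ⨆ i, |lpNorm 2 (M ω i) ^ 2 - 1| ∂μ) + 4 / 2 ^ m * ∑ T, E T := by
        rw [integral_add h2 (hsum.const_mul _), integral_const_mul,
          integral_finsetSum _ fun T _ => h3 T]
    _ ≤ _ := by
        grw [havg, ← mul_assoc, div_mul_cancel₀ _ (pow_ne_zero m two_ne_zero)]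

/-- Matrix decoupling:
`E ‖MM* − I‖ ≤ E max_i |‖m_i‖₂² − 1| + 4 max_{T ⊆ [m]} E ‖M_T M_{T̄}*‖`. -/
theorem stmt9 {Ω : Type*} [MeasurableSpace Ω] (μ : Measure Ω) [IsProbabilityMeasure μ]
    {m N : ℕ} (M : Ω → Matrix (Fin m) (Fin N) ℂ)
    (h1 : Integrable (fun ω => specNorm (M ω * (M ω)ᴴ - 1)) μ)
    (h2 : Integrable (fun ω => ⨆ i : Fin m, |lpNorm 2 (M ω i) ^ 2 - 1|) μ)
    (h3 : ∀ T : Finset (Fin m), Integrable (fun ω => specNorm (decoupledBlock (M ω) T)) μ) :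
    ∫ ω, specNorm (M ω * (M ω)ᴴ - 1) ∂μ ≤
      (∫ ω, (⨆ i : Fin m, |lpNorm 2 (M ω i) ^ 2 - 1|) ∂μ)
      + 4 * ⨆ T : Finset (Fin m), ∫ ω, specNorm (decoupledBlock (M ω) T) ∂μ :=
  stmt9_general μ M h2 h3
end

section
/- For all x ∈ [0, 1], arcsin(x) ≥ π/2 − √(π(1−x)), and for all x ∈ [−1, 0], arcsin(x) ≤ −π/2 + √(π(1+x)). -/
/-!
Writing `t = arccos x`, the first bound is `t² ≤ π (1 - x) = π (1 - cos t)` on `[0, π/2]`, the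
cosine form of the quadratic bound on `sin` near `π/2`. It follows from
`1 - cos t = 2 sin² (t/2)` and `sin s ≥ s - s³/6`, and the second bound is the first one
applied to `-x`, since `arcsin` is odd.
-/

open Real

namespace Real

lemma cos_le_one_sub_sq_div_pi {t : ℝ} (ht₀ : 0 ≤ t) (ht : t ≤ π / 2) :
    cos t ≤ 1 - t ^ 2 / π := by
  set s := t / 2 with hs
  have hs₀ : 0 ≤ s := by positivity
  have hs_sq : s ^ 2 ≤ 1 := by nlinarith [pi_lt_d2]
  have hcos : cos t = 1 - 2 * sin s ^ 2 := by
    rw [sin_sq_eq_half_sub, hs]; ring_nf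
  -- `s ≤ 1` gives `sin s ≥ 5s/6`, enough because `2 (5/6)² / 4 = 25/72 > 1/π`.
  have hsin : s * (5 / 6) ≤ sin s := by nlinarith [sin_ge_sub_cube hs₀]
  have hsin_sq : 2 * (s * (5 / 6)) ^ 2 * π ≥ t ^ 2 := by nlinarith [pi_gt_three]
  rw [hcos, le_sub_comm, div_le_iff₀ pi_pos]
  nlinarith [pow_le_pow_left₀ (by positivity) hsin 2, pi_pos]

lemma arccos_le_sqrt_pi_mul_one_sub {x : ℝ} (hx : 0 ≤ x) : arccos x ≤ √(π * (1 - x)) := by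
  rcases le_or_gt x 1 with hx₁ | hx₁
  · have hle := cos_le_one_sub_sq_div_pi (arccos_nonneg x) (arccos_le_pi_div_two.2 hx)
    rw [cos_arccos (by linarith) hx₁, le_sub_comm, div_le_iff₀ pi_pos] at hle
    exact (le_abs_self _).trans (abs_le_sqrt (by linarith))
  · rw [arccos_eq_zero.2 hx₁.le]
    exact sqrt_nonneg _

lemma pi_div_two_sub_sqrt_le_arcsin {x : ℝ} (hx : 0 ≤ x) :
    π / 2 - √(π * (1 - x)) ≤ arcsin x := by
  rw [arcsin_eq_pi_div_two_sub_arccos]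
  linarith [arccos_le_sqrt_pi_mul_one_sub hx]

lemma arcsin_le_neg_pi_div_two_add_sqrt {x : ℝ} (hx : x ≤ 0) :
    arcsin x ≤ -(π / 2) + √(π * (1 + x)) := by
  have h := pi_div_two_sub_sqrt_le_arcsin (neg_nonneg.2 hx)
  rw [arcsin_neg, sub_neg_eq_add] at h
  linarith

end Real

/-- `arcsin x ≥ π/2 − √(π(1−x))` on `[0,1]`, and
`arcsin x ≤ −π/2 + √(π(1+x))` on `[−1,0]`. -/
theorem stmt13 :
    (∀ x : ℝ, x ∈ Set.Icc (0 : ℝ) 1 →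
      Real.pi / 2 - Real.sqrt (Real.pi * (1 - x)) ≤ Real.arcsin x) ∧
    (∀ x : ℝ, x ∈ Set.Icc (-1 : ℝ) 0 →
      Real.arcsin x ≤ -(Real.pi / 2) + Real.sqrt (Real.pi * (1 + x))) :=
  ⟨fun _ hx => pi_div_two_sub_sqrt_le_arcsin hx.1,
    fun _ hx => arcsin_le_neg_pi_div_two_add_sqrt hx.2⟩
end

section
/- Let Φ = {φ_j}_{j=1}^N be a bounded orthonormal system with constant K on a domain D with probability measure ν, and let t_1, …, t_m be i.i.d. samples from ν, defining A_{ij} = m^{−1/2} φ_j(t_i). Fix 0 < ε < 1 and τ > 0, and suppose ‖C_N − 1‖_{L^∞(−1+ε, 1−ε)} ≤ τ where C_N(t) = (1/N) Σ_{j=1}^N |φ_j(t)|² and D = [−1,1] with ν the Chebyshev measure. Then the distortion ξ := E[max_{i∈[m]} |(m/N)‖a_i‖_2² − 1|] satisfies ξ ≤ τ + 2(K² + 1) m √(ε/π). -/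
/-!
On `[-1, 1]` the Christoffel function satisfies `0 ≤ C_N ≤ K²`, so `|C_N(t_i) - 1| ≤ K² + 1`
always, and `≤ τ` whenever `t_i` lies in the bulk `[-1 + ε, 1 - ε]`. Hence
`max_i |C_N(t_i) - 1| ≤ τ + (K² + 1) · #{i : t_i in the boundary layer}`, and taking expectations
gives `τ + (K² + 1) · m · ν(boundary layer)`. The arcsine distribution function is
`arcsin t / π + 1 / 2`, so each half of the layer has mass `arccos (1 - ε) / π`, and
`θ² ≤ π (1 - cos θ)` on `[0, π / 2]` bounds this by `√(ε / π)`.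
-/

open MeasureTheory Set Real

/-- The Chebyshev (arcsine) probability measure on `[−1,1]`,
`dν = π⁻¹ (1 − t²)^{−1/2} dt`. -/
noncomputable def chebMeasure : Measure ℝ :=
  (volume.restrict (Set.Icc (-1 : ℝ) 1)).withDensity
    (fun t => ENNReal.ofReal ((Real.pi * Real.sqrt (1 - t ^ 2))⁻¹))

lemma sq_le_pi_mul_one_sub_cos {x : ℝ} (hx₀ : 0 ≤ x) (hx : x ≤ 2) :
    x ^ 2 ≤ π * (1 - cos x) := by
  -- `1 - cos x = 2 sin² (x / 2) ≥ 2 (5 x / 12)² = 25 x² / 72`, and `72 / 25 < π`.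
  have hsin : 5 / 6 * (x / 2) ≤ sin (x / 2) := by
    have := sin_ge_sub_cube (x := x / 2) (by positivity)
    nlinarith [mul_nonneg hx₀ (mul_nonneg hx₀ (by linarith : 0 ≤ 2 - x))]
  have hcos : 1 - cos x = 2 * sin (x / 2) ^ 2 := by
    have := cos_two_mul (x / 2)
    rw [mul_div_cancel₀ x two_ne_zero] at this
    linarith [cos_sq_add_sin_sq (x / 2)]
  nlinarith [pi_gt_three]

lemma arccos_one_sub_div_pi_le {ε : ℝ} (hε₀ : 0 ≤ ε) (hε₁ : ε ≤ 1) :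
    arccos (1 - ε) / π ≤ √(ε / π) := by
  have hθ : arccos (1 - ε) ^ 2 ≤ π * ε := by
    have := sq_le_pi_mul_one_sub_cos (arccos_nonneg (1 - ε))
      ((arccos_le_pi_div_two.2 (by linarith)).trans (by linarith [pi_le_four]))
    rwa [cos_arccos (by linarith) (by linarith), sub_sub_cancel] at this
  rw [le_sqrt (div_nonneg (arccos_nonneg _) pi_pos.le) (by positivity), div_pow,
    div_le_div_iff₀ (by positivity) pi_pos]
  nlinarith [pi_pos]

lemma chebMeasure_apply {s : Set ℝ} (hs : MeasurableSet s) :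
    chebMeasure s = ∫⁻ t in s ∩ Icc (-1) 1, ENNReal.ofReal ((π * √(1 - t ^ 2))⁻¹) := by
  rw [chebMeasure, withDensity_apply _ hs, Measure.restrict_restrict hs]

lemma ae_chebMeasure_mem_Icc : ∀ᵐ t ∂chebMeasure, t ∈ Icc (-1 : ℝ) 1 :=
  (withDensity_absolutelyContinuous _ _).ae_le (ae_restrict_mem measurableSet_Icc)

lemma lintegral_Ioc_chebDensity {a b : ℝ} (ha : -1 ≤ a) (hab : a ≤ b) (hb : b ≤ 1) :
    ∫⁻ t in Ioc a b, ENNReal.ofReal ((π * √(1 - t ^ 2))⁻¹)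
      = ENNReal.ofReal ((arcsin b - arcsin a) / π) := by
  have hcont : ContinuousOn (fun x => arcsin x / π) (Icc a b) := by fun_prop
  have hderiv : ∀ x ∈ Ioo a b, HasDerivAt (fun x => arcsin x / π) ((π * √(1 - x ^ 2))⁻¹) x := by
    rintro x ⟨hax, hxb⟩
    exact ((hasDerivAt_arcsin (by linarith) (by linarith)).div_const π).congr_deriv (by ring)
  have hnonneg : ∀ x ∈ Ioo a b, 0 ≤ (π * √(1 - x ^ 2))⁻¹ := fun x _ => by positivity
  have hint := intervalIntegral.integrableOn_deriv_of_nonneg hcont hderiv hnonneg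
  rw [← ofReal_integral_eq_lintegral_ofReal hint (ae_of_all _ fun x => by positivity),
    ← intervalIntegral.integral_of_le hab,
    intervalIntegral.integral_eq_sub_of_hasDerivAt_of_le hab hcont hderiv
      ((intervalIntegrable_iff_integrableOn_Ioc_of_le hab).2 hint), sub_div]

lemma chebMeasure_compl_Icc_le {ε : ℝ} (hε₀ : 0 < ε) (hε₁ : ε < 1) :
    chebMeasure (Icc (-1 + ε) (1 - ε))ᶜ ≤ ENNReal.ofReal (2 * √(ε / π)) := by
  have hcover : (Icc (-1 + ε) (1 - ε))ᶜ ∩ Icc (-1) 1 ⊆ Ico (-1) (-1 + ε) ∪ Ioc (1 - ε) 1 := by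
    rintro x ⟨hx, hx₁, hx₂⟩
    simp only [mem_compl_iff, mem_Icc, not_and_or, not_le] at hx
    rcases hx with hx | hx
    · exact Or.inl ⟨hx₁, hx⟩
    · exact Or.inr ⟨hx, hx₂⟩
  have hleft := lintegral_Ioc_chebDensity le_rfl (by linarith) (by linarith : -1 + ε ≤ 1)
  have hright := lintegral_Ioc_chebDensity (a := 1 - ε) (by linarith) (by linarith) le_rfl
  rw [chebMeasure_apply measurableSet_Icc.compl]
  calc _ ≤ ∫⁻ t in Ico (-1) (-1 + ε) ∪ Ioc (1 - ε) 1, ENNReal.ofReal ((π * √(1 - t ^ 2))⁻¹) :=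
        lintegral_mono_set hcover
    _ ≤ _ := lintegral_union_le _ _ _
    _ = ENNReal.ofReal (arccos (1 - ε) / π) + ENNReal.ofReal (arccos (1 - ε) / π) := by
        rw [setLIntegral_congr Ico_ae_eq_Ioc, hleft, hright, arccos_eq_pi_div_two_sub_arcsin,
          show -1 + ε = -(1 - ε) by ring, arcsin_neg, arcsin_neg, arcsin_one]
        congr 2
        ring
    _ ≤ ENNReal.ofReal (2 * √(ε / π)) := by
        have h := div_nonneg (arccos_nonneg (1 - ε)) pi_pos.le
        rw [← ENNReal.ofReal_add h h]
        exact ENNReal.ofReal_le_ofReal (by linarith [arccos_one_sub_div_pi_le hε₀.le hε₁.le])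

lemma abs_mean_norm_sq_sub_one_le {E : Type*} [SeminormedAddGroup E] {N : ℕ} (v : Fin N → E)
    {K : ℝ} (hv : ∀ j, ‖v j‖ ≤ K) :
    |(1 / (N : ℝ)) * ∑ j, ‖v j‖ ^ 2 - 1| ≤ K ^ 2 + 1 := by
  have hsum : ∑ j, ‖v j‖ ^ 2 ≤ N * K ^ 2 := by
    simpa using Finset.sum_le_card_nsmul Finset.univ (fun j => ‖v j‖ ^ 2) (K ^ 2)
      fun j _ => pow_le_pow_left₀ (norm_nonneg _) (hv j) 2
  have hmean : (1 / (N : ℝ)) * ∑ j, ‖v j‖ ^ 2 ≤ K ^ 2 := by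
    rcases N.eq_zero_or_pos with rfl | hN
    · simp [sq_nonneg]
    · rw [one_div_mul_eq_div, div_le_iff₀' (by positivity)]
      exact hsum
  have : 0 ≤ (1 / (N : ℝ)) * ∑ j, ‖v j‖ ^ 2 := by positivity
  rw [abs_le]
  constructor <;> nlinarith [sq_nonneg K]

lemma iSup_le_add_mul_sum_indicator_compl {ι α : Type*} [Fintype ι] (x : ι → α) {f : α → ℝ}
    {G : Set α} {τ B : ℝ} (hτ : 0 ≤ τ) (hB : 0 ≤ B) (hfG : ∀ a ∈ G, f a ≤ τ)
    (hfB : ∀ i, f (x i) ≤ B) :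
    ⨆ i, f (x i) ≤ τ + B * ∑ i, Gᶜ.indicator 1 (x i) := by
  have hcount : ∀ i, 0 ≤ Gᶜ.indicator (1 : α → ℝ) (x i) := fun i =>
    indicator_nonneg (fun _ _ => zero_le_one) _
  have hS : 0 ≤ ∑ i, Gᶜ.indicator (1 : α → ℝ) (x i) := Finset.sum_nonneg fun i _ => hcount i
  refine Real.iSup_le (fun i => ?_) (by positivity)
  by_cases hi : x i ∈ G
  · exact (hfG _ hi).trans (le_add_of_nonneg_right (by positivity))
  · have hone : 1 ≤ ∑ i, Gᶜ.indicator (1 : α → ℝ) (x i) := by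
      calc (1 : ℝ) = Gᶜ.indicator 1 (x i) := by simp [hi]
        _ ≤ _ := Finset.single_le_sum (fun j _ => hcount j) (Finset.mem_univ i)
    nlinarith [hfB i]

theorem integral_iSup_le_add_mul_card_mul_measureReal_compl {Ω α ι : Type*} [MeasurableSpace Ω]
    [MeasurableSpace α] [Fintype ι] {μ : Measure Ω} [IsProbabilityMeasure μ] {ν : Measure α}
    {X : ι → Ω → α} (hX : ∀ i, Measurable (X i)) (hlaw : ∀ i, μ.map (X i) = ν)
    {f : α → ℝ} (hf : ∀ a, 0 ≤ f a) {G : Set α} (hG : MeasurableSet G) {τ B : ℝ} (hτ : 0 ≤ τ)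
    (hB : 0 ≤ B) (hfG : ∀ a ∈ G, f a ≤ τ) (hfB : ∀ᵐ a ∂ν, f a ≤ B) :
    ∫ ω, ⨆ i, f (X i ω) ∂μ ≤ τ + B * Fintype.card ι * ν.real Gᶜ := by
  have hfB' : ∀ᵐ ω ∂μ, ∀ i, f (X i ω) ≤ B :=
    ae_all_iff.2 fun i => ae_of_ae_map (hX i).aemeasurable (hlaw i ▸ hfB)
  have hind : ∀ i, (fun ω => Gᶜ.indicator (1 : α → ℝ) (X i ω)) = (X i ⁻¹' Gᶜ).indicator 1 :=
    fun _ => rfl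
  have hint : ∀ i, Integrable (fun ω => Gᶜ.indicator (1 : α → ℝ) (X i ω)) μ := fun i =>
    hind i ▸ (integrable_const 1).indicator (hX i hG.compl)
  have hmean : ∀ i, ∫ ω, Gᶜ.indicator (1 : α → ℝ) (X i ω) ∂μ = ν.real Gᶜ := fun i => by
    rw [hind i, integral_indicator_one (hX i hG.compl), ← map_measureReal_apply (hX i) hG.compl,
      hlaw]
  have hcount := integrable_finsetSum Finset.univ fun i _ => hint i
  calc ∫ ω, ⨆ i, f (X i ω) ∂μ ≤ ∫ ω, τ + B * ∑ i, Gᶜ.indicator 1 (X i ω) ∂μ :=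
        integral_mono_of_nonneg (ae_of_all _ fun ω => Real.iSup_nonneg fun i => hf _)
          ((integrable_const τ).add (hcount.const_mul B))
          (hfB'.mono fun ω hω => iSup_le_add_mul_sum_indicator_compl _ hτ hB hfG hω)
    _ = τ + B * Fintype.card ι * ν.real Gᶜ := by
        rw [integral_add (integrable_const τ) (hcount.const_mul B), integral_const_mul,
          integral_finsetSum _ fun i _ => hint i]
        simp [hmean, mul_assoc]

theorem stmt17_general {Ω : Type*} [MeasurableSpace Ω] (μ : Measure Ω) [IsProbabilityMeasure μ]
    {N m : ℕ} (K : ℝ) (φ : Fin N → ℝ → ℂ)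
    (hbdd : ∀ j, ∀ u ∈ Set.Icc (-1 : ℝ) 1, ‖φ j u‖ ≤ K)
    (t : Fin m → Ω → ℝ) (htm : ∀ i, Measurable (t i))
    (hlaw : ∀ i, μ.map (t i) = chebMeasure)
    (ε τ : ℝ) (hε0 : 0 < ε) (hε1 : ε < 1) (hτ : 0 < τ)
    (hChristoffel : ∀ u ∈ Set.Icc (-1 + ε) (1 - ε),
      |(1 / (N : ℝ)) * ∑ j, ‖φ j u‖ ^ 2 - 1| ≤ τ) :
    ∫ ω, (⨆ i : Fin m, |(1 / (N : ℝ)) * ∑ j, ‖φ j (t i ω)‖ ^ 2 - 1|) ∂μ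
      ≤ τ + 2 * (K ^ 2 + 1) * m * Real.sqrt (ε / Real.pi) := by
  have hbound : ∀ᵐ u ∂chebMeasure, |(1 / (N : ℝ)) * ∑ j, ‖φ j u‖ ^ 2 - 1| ≤ K ^ 2 + 1 :=
    ae_chebMeasure_mem_Icc.mono fun u hu => abs_mean_norm_sq_sub_one_le _ fun j => hbdd j u hu
  have hlayer : chebMeasure.real (Icc (-1 + ε) (1 - ε))ᶜ ≤ 2 * √(ε / π) :=
    ENNReal.toReal_le_of_le_ofReal (by positivity) (chebMeasure_compl_Icc_le hε0 hε1)
  calc _ ≤ τ + (K ^ 2 + 1) * Fintype.card (Fin m) * chebMeasure.real (Icc (-1 + ε) (1 - ε))ᶜ :=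
        integral_iSup_le_add_mul_card_mul_measureReal_compl htm hlaw (fun _ => abs_nonneg _)
          measurableSet_Icc hτ.le (by positivity) hChristoffel hbound
    _ ≤ τ + (K ^ 2 + 1) * m * (2 * √(ε / π)) := by
        rw [Fintype.card_fin]
        gcongr
    _ = τ + 2 * (K ^ 2 + 1) * m * Real.sqrt (ε / Real.pi) := by ring

/-- Distortion bound based on the Christoffel function: for a bounded orthonormal
system `φ₁, …, φ_N` (constant `K`) w.r.t. the Chebyshev measure, if the normalized
Christoffel function `C_N(t) = (1/N) Σ_j |φ_j(t)|²` satisfies `|C_N − 1| ≤ τ` on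
`[−1+ε, 1−ε]`, then the distortion `ξ = E[max_i |(m/N)‖a_i‖₂² − 1|]` of the random
sampling matrix `A_{ij} = m^{−1/2} φ_j(t_i)` satisfies `ξ ≤ τ + 2(K²+1) m √(ε/π)`. -/
theorem stmt17 {Ω : Type*} [MeasurableSpace Ω] (μ : Measure Ω) [IsProbabilityMeasure μ]
    {N m : ℕ} (hN : 1 ≤ N) (K : ℝ) (hK : 1 ≤ K)
    (φ : Fin N → ℝ → ℂ) (hφm : ∀ j, Measurable (φ j))
    (hbdd : ∀ j, ∀ u ∈ Set.Icc (-1 : ℝ) 1, ‖φ j u‖ ≤ K)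
    (hortho : ∀ j k, ∫ u, φ j u * (starRingEnd ℂ) (φ k u) ∂chebMeasure
        = if j = k then 1 else 0)
    (t : Fin m → Ω → ℝ) (htm : ∀ i, Measurable (t i))
    (hlaw : ∀ i, μ.map (t i) = chebMeasure)
    (hindep : ProbabilityTheory.iIndepFun t μ)
    (ε τ : ℝ) (hε0 : 0 < ε) (hε1 : ε < 1) (hτ : 0 < τ)
    (hChristoffel : ∀ u ∈ Set.Icc (-1 + ε) (1 - ε),
      |(1 / (N : ℝ)) * ∑ j, ‖φ j u‖ ^ 2 - 1| ≤ τ) :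
    ∫ ω, (⨆ i : Fin m, |(1 / (N : ℝ)) * ∑ j, ‖φ j (t i ω)‖ ^ 2 - 1|) ∂μ
      ≤ τ + 2 * (K ^ 2 + 1) * m * Real.sqrt (ε / Real.pi) :=
  stmt17_general μ K φ hbdd t htm hlaw ε τ hε0 hε1 hτ hChristoffel
end

section
/- Suppose A ∈ ℂ^{m×N} satisfies the ℓ^q-robust null space property of order s with constants 0 < ρ < 1 and τ > 0 relative to the rescaled norm s^(1/q−1/2)‖·‖ on ℂ^m. Then the pair (A, Δ_η) with Δ_η the quadratically-constrained basis pursuit decoder is η-robustly mixed (ℓ^p, ℓ^1)-instance optimal of order s for every 1 ≤ p ≤ q, with constants C = 2(1+ρ)²/(1−ρ) and D = 2(3+ρ)τ/(1−ρ): for all x ∈ ℂ^N and all e with ‖e‖ ≤ η, every minimizer x̂ ∈ Δ_η(Ax + e) satisfies ‖x − x̂‖_p ≤ C s^(1/p−1) σ_s(x)_1 + D s^(1/p−1/2) η. -/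
/-- Best `s`-term approximation error of `x` in the `ℓ^1` norm. -/
noncomputable def bestApprox1 {n : ℕ} (s : ℕ) (x : Fin n → ℂ) : ℝ :=
  sInf ((fun w => lpNorm 1 (x - w)) ''
    {w : Fin n → ℂ | ∃ S : Finset (Fin n), S.card ≤ s ∧ ∀ i ∉ S, w i = 0})

def restrictTo {n : ℕ} (S : Finset (Fin n)) (z : Fin n → ℂ) : Fin n → ℂ :=
  fun i => if i ∈ S then z i else 0

/-- `ℓ^q`-robust null space property of order `s` with constants `ρ, τ` relative to the
norm `nu` on `ℂ^m`. -/
def RNSP {m N : ℕ} (A : Matrix (Fin m) (Fin N) ℂ) (nu : (Fin m → ℂ) → ℝ)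
    (q : ℝ) (s : ℕ) (ρ τ : ℝ) : Prop :=
  ∀ S : Finset (Fin N), S.card ≤ s → ∀ z : Fin N → ℂ,
    lpNorm q (restrictTo S z) ≤
      (s : ℝ) ^ (1 / q - 1) * ρ * lpNorm 1 (restrictTo Sᶜ z) + τ * nu (A.mulVec z)

/-- The quadratically-constrained basis pursuit decoder: the set of `ℓ^1`-minimizers
among the feasible vectors `{z : nn(Az − y) ≤ η}`. -/
def qcbp {m N : ℕ} (A : Matrix (Fin m) (Fin N) ℂ) (nn : (Fin m → ℂ) → ℝ)
    (η : ℝ) (y : Fin m → ℂ) : Set (Fin N → ℂ) :=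
  {z | nn (A.mulVec z - y) ≤ η ∧
    ∀ w : Fin N → ℂ, nn (A.mulVec w - y) ≤ η → lpNorm 1 z ≤ lpNorm 1 w}

open Finset

section Sums

variable {ι : Type*}

theorem rpow_sum_rpow_le_card_rpow_mul {S : Finset ι} {f : ι → ℝ} {p q : ℝ} (hp : 0 < p)
    (hpq : p ≤ q) (hf : ∀ i ∈ S, 0 ≤ f i) :
    (∑ i ∈ S, f i ^ p) ^ (1 / p) ≤ (#S : ℝ) ^ (1 / p - 1 / q) * (∑ i ∈ S, f i ^ q) ^ (1 / q) := by
  have hq : 0 < q := hp.trans_le hpq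
  have hfp : ∀ i ∈ S, 0 ≤ f i ^ p := fun i hi => Real.rpow_nonneg (hf i hi) p
  -- the power-mean inequality for the exponent `q / p ≥ 1`, applied to `f i ^ p`
  have key := Real.rpow_sum_le_const_mul_sum_rpow_of_nonneg S ((one_le_div hp).2 hpq) hfp
  rw [sum_congr rfl fun i hi => (Real.rpow_mul (hf i hi) p (q / p)).symm,
    mul_div_cancel₀ q hp.ne'] at key
  calc (∑ i ∈ S, f i ^ p) ^ (1 / p) = ((∑ i ∈ S, f i ^ p) ^ (q / p)) ^ (1 / q) := by
        rw [← Real.rpow_mul (sum_nonneg hfp)]; field_simp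
    _ ≤ ((#S : ℝ) ^ (q / p - 1) * ∑ i ∈ S, f i ^ q) ^ (1 / q) :=
        Real.rpow_le_rpow (Real.rpow_nonneg (sum_nonneg hfp) _) key (by positivity)
    _ = (#S : ℝ) ^ (1 / p - 1 / q) * (∑ i ∈ S, f i ^ q) ^ (1 / q) := by
        rw [Real.mul_rpow (by positivity) (sum_nonneg fun i hi => Real.rpow_nonneg (hf i hi) q),
          ← Real.rpow_mul (Nat.cast_nonneg _)]
        congr 2
        field_simp

theorem sum_rpow_le_rpow_mul_sum {S : Finset ι} {f : ι → ℝ} {M p : ℝ} (hp : 1 ≤ p)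
    (hf : ∀ i ∈ S, 0 ≤ f i) (hfM : ∀ i ∈ S, f i ≤ M) :
    ∑ i ∈ S, f i ^ p ≤ M ^ (p - 1) * ∑ i ∈ S, f i := by
  rw [mul_sum]
  refine sum_le_sum fun i hi => ?_
  calc f i ^ p = f i ^ (p - 1) * f i := by
        conv_lhs => rw [← sub_add_cancel p 1]
        rw [Real.rpow_add' (hf i hi) (by linarith), Real.rpow_one]
    _ ≤ M ^ (p - 1) * f i := by
        have := hf i hi
        gcongr
        exact hfM i hi

theorem sum_compl_norm_sub_le [Fintype ι] [DecidableEq ι] {E : Type*}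
    [SeminormedAddCommGroup E] (S : Finset ι) (z w : ι → E) :
    ∑ i ∈ Sᶜ, ‖z i - w i‖ ≤
      ∑ i, ‖z i‖ - ∑ i, ‖w i‖ + ∑ i ∈ S, ‖z i - w i‖ + 2 * ∑ i ∈ Sᶜ, ‖w i‖ := by
  have hS : ∑ i ∈ S, ‖w i‖ ≤ ∑ i ∈ S, ‖z i‖ + ∑ i ∈ S, ‖z i - w i‖ := by
    rw [← sum_add_distrib]
    exact sum_le_sum fun i _ => norm_le_insert (z i) (w i)
  have hSc : ∑ i ∈ Sᶜ, ‖z i - w i‖ ≤ ∑ i ∈ Sᶜ, ‖z i‖ + ∑ i ∈ Sᶜ, ‖w i‖ := by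
    rw [← sum_add_distrib]
    exact sum_le_sum fun i _ => norm_sub_le (z i) (w i)
  linarith [sum_add_sum_compl S fun i => ‖z i‖, sum_add_sum_compl S fun i => ‖w i‖]

theorem exists_card_le_forall_sum_le [Fintype ι] (s : ℕ) (a : ι → ℝ) :
    ∃ T : Finset ι, #T ≤ s ∧ ∀ S : Finset ι, #S ≤ s → ∑ i ∈ S, a i ≤ ∑ i ∈ T, a i := by
  classical
  obtain ⟨T, hT, hmax⟩ := exists_max_image ({S | #S ≤ s} : Finset (Finset ι))
    (fun S => ∑ i ∈ S, a i) ⟨∅, by simp⟩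
  exact ⟨T, by simpa using hT, fun S hS => hmax S (by simpa using hS)⟩

theorem mul_le_sum_of_forall_sum_le [DecidableEq ι] {s : ℕ} {a : ι → ℝ} (ha : ∀ i, 0 ≤ a i)
    {T : Finset ι} (hT : #T ≤ s) (hmax : ∀ S : Finset ι, #S ≤ s → ∑ i ∈ S, a i ≤ ∑ i ∈ T, a i)
    {i : ι} (hi : i ∉ T) : s * a i ≤ ∑ j ∈ T, a j := by
  rcases hT.lt_or_eq with hlt | rfl
  · have hzero : a i ≤ 0 := by
      have := hmax (insert i T) (by rw [card_insert_of_notMem hi]; omega)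
      rw [sum_insert hi] at this
      linarith
    nlinarith [ha i, sum_nonneg fun j (_ : j ∈ T) => ha j]
  · -- swapping any `j ∈ T` for `i` does not increase the sum, so `a i ≤ a j`
    have hle : ∀ j ∈ T, a i ≤ a j := fun j hj => by
      have := hmax (insert i (T.erase j)) <| by
        rw [card_insert_of_notMem fun h => hi (mem_of_mem_erase h), card_erase_of_mem hj]
        have := card_pos.2 ⟨j, hj⟩
        omega
      rw [sum_insert fun h => hi (mem_of_mem_erase h), sum_erase_eq_sub hj] at this
      linarith
    simpa using card_nsmul_le_sum T a (a i) hle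

end Sums

section LpNorm

variable {n : ℕ}

theorem lpNorm_one_eq (x : Fin n → ℂ) : lpNorm 1 x = ∑ i, ‖x i‖ := by
  simp [lpNorm]

theorem lpNorm_sub_comm (p : ℝ) (x y : Fin n → ℂ) : lpNorm p (x - y) = lpNorm p (y - x) := by
  simp only [lpNorm, Pi.sub_apply, norm_sub_rev]

theorem lpNorm_restrictTo {p : ℝ} (hp : 0 < p) (S : Finset (Fin n)) (x : Fin n → ℂ) :
    lpNorm p (restrictTo S x) = (∑ i ∈ S, ‖x i‖ ^ p) ^ (1 / p) := by
  simp [lpNorm, restrictTo, apply_ite, Real.zero_rpow hp.ne', sum_ite_mem]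

theorem lpNorm_one_restrictTo (S : Finset (Fin n)) (x : Fin n → ℂ) :
    lpNorm 1 (restrictTo S x) = ∑ i ∈ S, ‖x i‖ := by
  simp [lpNorm_restrictTo one_pos]

theorem restrictTo_add_restrictTo_compl (S : Finset (Fin n)) (x : Fin n → ℂ) :
    restrictTo S x + restrictTo Sᶜ x = x := by
  funext i
  by_cases h : i ∈ S <;> simp [restrictTo, h]

theorem lpNorm_add_le {p : ℝ} (hp : 1 ≤ p) (x y : Fin n → ℂ) :
    lpNorm p (x + y) ≤ lpNorm p x + lpNorm p y :=
  calc lpNorm p (x + y) ≤ (∑ i, (‖x i‖ + ‖y i‖) ^ p) ^ (1 / p) := by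
        unfold lpNorm
        gcongr with i
        exact norm_add_le _ _
    _ ≤ lpNorm p x + lpNorm p y :=
        Real.Lp_add_le_of_nonneg univ hp (fun i _ => norm_nonneg _) fun i _ => norm_nonneg _

theorem lpNorm_restrictTo_le_rpow_mul {p q : ℝ} (hp : 0 < p) (hpq : p ≤ q) {s : ℕ}
    {S : Finset (Fin n)} (hS : #S ≤ s) (x : Fin n → ℂ) :
    lpNorm p (restrictTo S x) ≤ (s : ℝ) ^ (1 / p - 1 / q) * lpNorm q (restrictTo S x) := by
  rw [lpNorm_restrictTo hp, lpNorm_restrictTo (hp.trans_le hpq)]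
  refine (rpow_sum_rpow_le_card_rpow_mul hp hpq fun i _ => norm_nonneg (x i)).trans ?_
  have : 0 ≤ 1 / p - 1 / q := sub_nonneg.2 (one_div_le_one_div_of_le hp hpq)
  gcongr

theorem lpNorm_restrictTo_compl_le {p : ℝ} (hp : 1 ≤ p) {s : ℕ} (hs : 0 < s)
    {T : Finset (Fin n)} (x : Fin n → ℂ) (hT : ∀ i ∉ T, s * ‖x i‖ ≤ ∑ j, ‖x j‖) :
    lpNorm p (restrictTo Tᶜ x) ≤ (s : ℝ) ^ (1 / p - 1) * ∑ j, ‖x j‖ := by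
  have hp0 : 0 < p := one_pos.trans_le hp
  have hs0 : (0 : ℝ) < s := Nat.cast_pos.2 hs
  set L := ∑ j, ‖x j‖
  have hL : 0 ≤ L := sum_nonneg fun j _ => norm_nonneg _
  -- every entry off `T` is at most the average `L / s`
  have hsum : ∑ i ∈ Tᶜ, ‖x i‖ ^ p ≤ (L / s) ^ (p - 1) * L := by
    refine (sum_rpow_le_rpow_mul_sum (M := L / s) hp (fun i _ => norm_nonneg _)
      fun i hi => ?_).trans ?_
    · rw [le_div_iff₀ hs0, mul_comm]
      exact hT i (mem_compl.1 hi)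
    · gcongr
      exact sum_le_sum_of_subset_of_nonneg (subset_univ _) fun i _ _ => norm_nonneg _
  rw [lpNorm_restrictTo hp0]
  calc (∑ i ∈ Tᶜ, ‖x i‖ ^ p) ^ (1 / p) ≤ ((L / s) ^ (p - 1) * L) ^ (1 / p) := by gcongr
    _ = (s : ℝ) ^ (1 / p - 1) * L := by
        have e1 : (p - 1) * (1 / p) + 1 / p = 1 := by field_simp; ring
        have e2 : -((p - 1) * (1 / p)) = 1 / p - 1 := by field_simp; ring
        rw [Real.mul_rpow (by positivity) hL, ← Real.rpow_mul (by positivity),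
          Real.div_rpow hL hs0.le, div_mul_eq_mul_div,
          ← Real.rpow_add' hL (by rw [e1]; exact one_ne_zero), e1,
          Real.rpow_one, div_eq_mul_inv, ← Real.rpow_neg hs0.le, e2, mul_comm]

theorem sum_compl_le_bestApprox1 (s : ℕ) (x : Fin n → ℂ) {T : Finset (Fin n)}
    (hmax : ∀ S : Finset (Fin n), #S ≤ s → ∑ i ∈ S, ‖x i‖ ≤ ∑ i ∈ T, ‖x i‖) :
    ∑ i ∈ Tᶜ, ‖x i‖ ≤ bestApprox1 s x := by
  refine le_csInf ⟨_, 0, ⟨∅, by simp, fun i _ => rfl⟩, rfl⟩ ?_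
  rintro _ ⟨w, ⟨S, hS, hw⟩, rfl⟩
  calc ∑ i ∈ Tᶜ, ‖x i‖ ≤ ∑ i ∈ Sᶜ, ‖x i‖ := by
        linarith [hmax S hS, sum_add_sum_compl T fun i => ‖x i‖,
          sum_add_sum_compl S fun i => ‖x i‖]
    _ = ∑ i ∈ Sᶜ, ‖(x - w) i‖ :=
        sum_congr rfl fun i hi => by rw [Pi.sub_apply, hw i (mem_compl.1 hi), sub_zero]
    _ ≤ lpNorm 1 (x - w) := by
        rw [lpNorm_one_eq]
        exact sum_le_sum_of_subset_of_nonneg (subset_univ _) fun i _ _ => norm_nonneg _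

end LpNorm

namespace RNSP

variable {m N : ℕ} {A : Matrix (Fin m) (Fin N) ℂ} {ν : (Fin m → ℂ) → ℝ} {q : ℝ} {s : ℕ}
  {ρ τ : ℝ}

theorem sum_le (h : RNSP A ν q s ρ τ) (hq : 1 ≤ q) (hs : 0 < s) {S : Finset (Fin N)}
    (hS : #S ≤ s) (v : Fin N → ℂ) :
    ∑ i ∈ S, ‖v i‖ ≤ ρ * ∑ i ∈ Sᶜ, ‖v i‖ + τ * (s : ℝ) ^ (1 - 1 / q) * ν (A.mulVec v) := by
  have hs0 : (0 : ℝ) < s := Nat.cast_pos.2 hs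
  have hnsp := h S hS v
  rw [lpNorm_one_restrictTo] at hnsp
  calc ∑ i ∈ S, ‖v i‖ ≤ (s : ℝ) ^ (1 - 1 / q) * lpNorm q (restrictTo S v) := by
        simpa [lpNorm_one_restrictTo] using lpNorm_restrictTo_le_rpow_mul one_pos hq hS v
    _ ≤ (s : ℝ) ^ (1 - 1 / q) *
          ((s : ℝ) ^ (1 / q - 1) * ρ * ∑ i ∈ Sᶜ, ‖v i‖ + τ * ν (A.mulVec v)) := by gcongr
    _ = ρ * ∑ i ∈ Sᶜ, ‖v i‖ + τ * (s : ℝ) ^ (1 - 1 / q) * ν (A.mulVec v) := by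
        rw [mul_add, ← mul_assoc, ← mul_assoc, ← Real.rpow_add hs0]
        simp only [sub_add_sub_cancel', sub_self, Real.rpow_zero]
        ring

theorem lpNorm_le (h : RNSP A ν q s ρ τ) {p : ℝ} (hp : 1 ≤ p) (hpq : p ≤ q) (hs : 0 < s)
    (hρ : 0 ≤ ρ) (v : Fin N → ℂ) :
    lpNorm p v ≤
      (1 + ρ) * (s : ℝ) ^ (1 / p - 1) * ∑ i, ‖v i‖
        + τ * (s : ℝ) ^ (1 / p - 1 / q) * ν (A.mulVec v) := by
  have hs0 : (0 : ℝ) < s := Nat.cast_pos.2 hs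
  have hsum_le : ∀ S : Finset (Fin N), ∑ i ∈ S, ‖v i‖ ≤ ∑ i, ‖v i‖ := fun S =>
    sum_le_sum_of_subset_of_nonneg (subset_univ S) fun i _ _ => norm_nonneg _
  obtain ⟨T, hT, hmax⟩ := exists_card_le_forall_sum_le s fun i => ‖v i‖
  have htail := lpNorm_restrictTo_compl_le hp hs v fun i hi =>
    (mul_le_sum_of_forall_sum_le (fun i => norm_nonneg (v i)) hT hmax hi).trans (hsum_le T)
  have hhead : lpNorm p (restrictTo T v) ≤
      ρ * (s : ℝ) ^ (1 / p - 1) * ∑ i, ‖v i‖ + τ * (s : ℝ) ^ (1 / p - 1 / q) * ν (A.mulVec v) :=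
    calc lpNorm p (restrictTo T v) ≤ (s : ℝ) ^ (1 / p - 1 / q) * lpNorm q (restrictTo T v) :=
          lpNorm_restrictTo_le_rpow_mul (one_pos.trans_le hp) hpq hT v
      _ ≤ (s : ℝ) ^ (1 / p - 1 / q) *
            ((s : ℝ) ^ (1 / q - 1) * ρ * ∑ i, ‖v i‖ + τ * ν (A.mulVec v)) := by
          refine mul_le_mul_of_nonneg_left ((h T hT v).trans ?_) (by positivity)
          rw [lpNorm_one_restrictTo]
          gcongr
          exact subset_univ _
      _ = _ := by
          rw [mul_add, ← mul_assoc, ← mul_assoc, ← Real.rpow_add hs0]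
          simp only [sub_add_sub_cancel]
          ring
  calc lpNorm p v = lpNorm p (restrictTo T v + restrictTo Tᶜ v) := by
        rw [restrictTo_add_restrictTo_compl]
    _ ≤ lpNorm p (restrictTo T v) + lpNorm p (restrictTo Tᶜ v) := lpNorm_add_le hp _ _
    _ ≤ _ := by linarith

theorem sum_norm_sub_le (h : RNSP A ν q s ρ τ) (hq : 1 ≤ q) (hs : 0 < s) (hρ0 : 0 ≤ ρ)
    (hρ1 : ρ < 1) (z w : Fin N → ℂ) :
    (1 - ρ) * ∑ i, ‖z i - w i‖ ≤ (1 + ρ) * (lpNorm 1 z - lpNorm 1 w + 2 * bestApprox1 s w)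
      + 2 * τ * (s : ℝ) ^ (1 - 1 / q) * ν (A.mulVec (z - w)) := by
  obtain ⟨S, hS, hmax⟩ := exists_card_le_forall_sum_le s fun i => ‖w i‖
  have hσ := sum_compl_le_bestApprox1 s w hmax
  have hcone := sum_compl_norm_sub_le S z w
  have hnsp := h.sum_le hq hs hS (z - w)
  simp only [Pi.sub_apply] at hnsp
  rw [lpNorm_one_eq, lpNorm_one_eq, ← sum_add_sum_compl S]
  set K := τ * (s : ℝ) ^ (1 - 1 / q) * ν (A.mulVec (z - w))
  have hcompl : (1 - ρ) * ∑ i ∈ Sᶜ, ‖z i - w i‖ ≤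
      ∑ i, ‖z i‖ - ∑ i, ‖w i‖ + 2 * bestApprox1 s w + K := by
    linarith
  nlinarith [mul_le_mul_of_nonneg_left hnsp (sub_nonneg.2 hρ1.le),
    mul_le_mul_of_nonneg_left hcompl (by linarith : (0 : ℝ) ≤ 1 + ρ)]

theorem lpNorm_sub_le (h : RNSP A ν q s ρ τ) {p : ℝ} (hp : 1 ≤ p) (hpq : p ≤ q) (hs : 0 < s)
    (hρ0 : 0 ≤ ρ) (hρ1 : ρ < 1) (z w : Fin N → ℂ) :
    lpNorm p (z - w) ≤
      (1 + ρ) ^ 2 / (1 - ρ) * (s : ℝ) ^ (1 / p - 1) *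
          (lpNorm 1 z - lpNorm 1 w + 2 * bestApprox1 s w)
        + (3 + ρ) * τ / (1 - ρ) * (s : ℝ) ^ (1 / p - 1 / q) * ν (A.mulVec (z - w)) := by
  have h1ρ : 0 < 1 - ρ := sub_pos.2 hρ1
  have hexp : (s : ℝ) ^ (1 / p - 1) * (s : ℝ) ^ (1 - 1 / q) = (s : ℝ) ^ (1 / p - 1 / q) := by
    rw [← Real.rpow_add (Nat.cast_pos.2 hs), sub_add_sub_cancel]
  have hp_bound := h.lpNorm_le hp hpq hs hρ0 (z - w)
  have hl1_bound := h.sum_norm_sub_le (hp.trans hpq) hs hρ0 hρ1 z w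
  simp only [Pi.sub_apply] at hp_bound
  rw [← hexp] at hp_bound ⊢
  have key := add_le_add (mul_le_mul_of_nonneg_left hp_bound h1ρ.le)
    (mul_le_mul_of_nonneg_left hl1_bound (by positivity : 0 ≤ (1 + ρ) * (s : ℝ) ^ (1 / p - 1)))
  set E := lpNorm 1 z - lpNorm 1 w + 2 * bestApprox1 s w
  set K := (s : ℝ) ^ (1 / p - 1) * (s : ℝ) ^ (1 - 1 / q)
  calc lpNorm p (z - w) = (1 - ρ) * lpNorm p (z - w) / (1 - ρ) := by field_simp
    _ ≤ ((1 + ρ) ^ 2 * (s : ℝ) ^ (1 / p - 1) * E + (3 + ρ) * τ * K * ν (A.mulVec (z - w)))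
          / (1 - ρ) := by
        gcongr
        linarith
    _ = _ := by ring

end RNSP

theorem stmt18_general {m N : ℕ} (A : Matrix (Fin m) (Fin N) ℂ)
    (nn : (Fin m → ℂ) → ℝ)
    (nn_add : ∀ x y, nn (x + y) ≤ nn x + nn y)
    (nn_smul : ∀ (c : ℂ) x, nn (c • x) = ‖c‖ * nn x)
    (q : ℝ) (s : ℕ) (hs : 1 ≤ s)
    (ρ τ : ℝ) (hρ0 : 0 < ρ) (hρ1 : ρ < 1) (hτ : 0 < τ)
    (hNSP : RNSP A (fun v => (s : ℝ) ^ ((1 : ℝ) / q - 1 / 2) * nn v) q s ρ τ)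
    (η : ℝ) (p : ℝ) (hp1 : 1 ≤ p) (hpq : p ≤ q)
    (x : Fin N → ℂ) (e : Fin m → ℂ) (he : nn e ≤ η)
    (xh : Fin N → ℂ) (hxh : xh ∈ qcbp A nn η (A.mulVec x + e)) :
    lpNorm p (x - xh) ≤
      2 * (1 + ρ) ^ 2 / (1 - ρ) * (s : ℝ) ^ ((1 : ℝ) / p - 1) * bestApprox1 s x
      + 2 * (3 + ρ) * τ / (1 - ρ) * (s : ℝ) ^ ((1 : ℝ) / p - 1 / 2) * η := by
  obtain ⟨hxh_feasible, hxh_min⟩ := hxh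
  have hx_feasible : nn (A.mulVec x - (A.mulVec x + e)) ≤ η := by
    rwa [sub_add_cancel_left, ← neg_one_smul ℂ, nn_smul, norm_neg, norm_one, one_mul]
  have hl1 : lpNorm 1 xh ≤ lpNorm 1 x := hxh_min x hx_feasible
  have hresidual : nn (A.mulVec (xh - x)) ≤ 2 * η := by
    have : A.mulVec (xh - x) = (A.mulVec xh - (A.mulVec x + e)) + e := by
      rw [Matrix.mulVec_sub]; abel
    linarith [this ▸ nn_add (A.mulVec xh - (A.mulVec x + e)) e]
  have hexp :
      (s : ℝ) ^ (1 / p - 1 / q) * (s : ℝ) ^ (1 / q - 1 / 2) = (s : ℝ) ^ (1 / p - 1 / 2) := by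
    rw [← Real.rpow_add (by exact_mod_cast hs), sub_add_sub_cancel]
  have h1ρ : 0 < 1 - ρ := sub_pos.2 hρ1
  calc lpNorm p (x - xh) = lpNorm p (xh - x) := lpNorm_sub_comm p x xh
    _ ≤ (1 + ρ) ^ 2 / (1 - ρ) * (s : ℝ) ^ (1 / p - 1) *
          (lpNorm 1 xh - lpNorm 1 x + 2 * bestApprox1 s x)
        + (3 + ρ) * τ / (1 - ρ) * (s : ℝ) ^ (1 / p - 1 / q) *
          ((s : ℝ) ^ (1 / q - 1 / 2) * nn (A.mulVec (xh - x))) :=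
        hNSP.lpNorm_sub_le hp1 hpq hs hρ0.le hρ1 xh x
    _ ≤ (1 + ρ) ^ 2 / (1 - ρ) * (s : ℝ) ^ (1 / p - 1) * (2 * bestApprox1 s x)
        + (3 + ρ) * τ / (1 - ρ) * (s : ℝ) ^ (1 / p - 1 / q) *
          ((s : ℝ) ^ (1 / q - 1 / 2) * (2 * η)) := by
        gcongr
        linarith
    _ = _ := by rw [← hexp]; ring

/-- Robust null space property ⟹ robust instance optimality of QCBP: if `A` satisfies
the `ℓ^q`-RNSP of order `s` with constants `ρ, τ` relative to `s^(1/q−1/2)‖·‖`, then for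
all `1 ≤ p ≤ q`, all `x` and all `e` with `‖e‖ ≤ η`, every minimizer
`x̂ ∈ Δ_η(Ax + e)` satisfies
`‖x − x̂‖_p ≤ C s^(1/p−1) σ_s(x)₁ + D s^(1/p−1/2) η` with
`C = 2(1+ρ)²/(1−ρ)` and `D = 2(3+ρ)τ/(1−ρ)`. -/
theorem stmt18 {m N : ℕ} (A : Matrix (Fin m) (Fin N) ℂ)
    (nn : (Fin m → ℂ) → ℝ)
    (nn_add : ∀ x y, nn (x + y) ≤ nn x + nn y)
    (nn_smul : ∀ (c : ℂ) x, nn (c • x) = ‖c‖ * nn x)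
    (nn_eq_zero : ∀ x, nn x = 0 ↔ x = 0)
    (q : ℝ) (hq : 1 ≤ q) (s : ℕ) (hs : 1 ≤ s)
    (ρ τ : ℝ) (hρ0 : 0 < ρ) (hρ1 : ρ < 1) (hτ : 0 < τ)
    (hNSP : RNSP A (fun v => (s : ℝ) ^ ((1 : ℝ) / q - 1 / 2) * nn v) q s ρ τ)
    (η : ℝ) (hη : 0 ≤ η) (p : ℝ) (hp1 : 1 ≤ p) (hpq : p ≤ q)
    (x : Fin N → ℂ) (e : Fin m → ℂ) (he : nn e ≤ η)
    (xh : Fin N → ℂ) (hxh : xh ∈ qcbp A nn η (A.mulVec x + e)) :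
    lpNorm p (x - xh) ≤
      2 * (1 + ρ) ^ 2 / (1 - ρ) * (s : ℝ) ^ ((1 : ℝ) / p - 1) * bestApprox1 s x
      + 2 * (3 + ρ) * τ / (1 - ρ) * (s : ℝ) ^ ((1 : ℝ) / p - 1 / 2) * η :=
  stmt18_general A nn nn_add nn_smul q s hs ρ τ hρ0 hρ1 hτ hNSP η p hp1 hpq x e he xh hxh
end
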